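/- Let $T = ([\sigma_1,\sigma_2]\times\{0\}) \cup (\{0\}\times[\tau_1,\tau_2])$ with $\sigma_1,\tau_1 \le 0 < \sigma_2,\tau_2$, and let $(\bar y, \bar z) \in \mathbb{R}^2$. Then $(\hat y,\hat z)$ is a projection of $(\bar y,\bar z)$ onto $T$ if and only if: $(\hat y,\hat z) = (P_{[\sigma_1,\sigma_2]}(\bar y),0)$ when $\phi_s(\bar y,\bar z) < \phi_t(\bar y,\bar z)$; $(\hat y,\hat z) = (0,P_{[\tau_1,\tau_2]}(\bar z))$ when $\phi_s(\bar y,\bar z) > \phi_t(\bar y,\bar z)$; and $(\hat y,\hat z)$ is one of these two points when $\phi_s(\bar y,\bar z) = \phi_t(\bar y,\bar z)$. Here $\phi_s(a,b) = (P_{[\sigma_1,\sigma_2]}(a)-a)^2+b^2$ and $\phi_t(a,b) = a^2+(P_{[\tau_1,\tau_2]}(b)-b)^2$. -/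
import Mathlib

/-- Projection of a real number onto the interval `[l, u]`. -/
noncomputable def projInt (l u t : ℝ) : ℝ := max l (min t u)

lemma projInt_mem {l u : ℝ} (h : l ≤ u) (t : ℝ) : projInt l u t ∈ Set.Icc l u :=
  ⟨le_max_left _ _, max_le h (min_le_right _ _)⟩

lemma projInt_min {l u : ℝ} (h : l ≤ u) {t x : ℝ} (hx : x ∈ Set.Icc l u) :
    (projInt l u t - t) ^ 2 ≤ (x - t) ^ 2 := by
  obtain ⟨h1, h2⟩ := hx
  unfold projInt
  rcases le_total t l with ht | ht
  · rw [min_eq_left (ht.trans h), max_eq_left ht]; nlinarith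
  rcases le_total t u with ht2 | ht2
  · rw [min_eq_left ht2, max_eq_right ht]; nlinarith
  · rw [min_eq_right ht2, max_eq_right h]; nlinarith

lemma projInt_uniq {l u : ℝ} (h : l ≤ u) {t x : ℝ} (hx : x ∈ Set.Icc l u)
    (he : (x - t) ^ 2 ≤ (projInt l u t - t) ^ 2) : x = projInt l u t := by
  obtain ⟨h1, h2⟩ := hx
  unfold projInt at he ⊢
  rcases le_total t l with ht | ht
  · rw [min_eq_left (ht.trans h), max_eq_left ht] at he ⊢; nlinarith
  rcases le_total t u with ht2 | ht2
  · rw [min_eq_left ht2, max_eq_right ht] at he ⊢; nlinarith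
  · rw [min_eq_right ht2, max_eq_right h] at he ⊢; nlinarith

theorem stmt_7 (σ1 σ2 τ1 τ2 : ℝ) (hσ1 : σ1 ≤ 0) (hσ2 : 0 < σ2)
    (hτ1 : τ1 ≤ 0) (hτ2 : 0 < τ2) (ybar zbar : ℝ) (p : ℝ × ℝ) :
    (p ∈ (Set.Icc σ1 σ2 ×ˢ ({0} : Set ℝ)) ∪ (({0} : Set ℝ) ×ˢ Set.Icc τ1 τ2) ∧
      ∀ q ∈ (Set.Icc σ1 σ2 ×ˢ ({0} : Set ℝ)) ∪ (({0} : Set ℝ) ×ˢ Set.Icc τ1 τ2),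
        (p.1 - ybar) ^ 2 + (p.2 - zbar) ^ 2 ≤ (q.1 - ybar) ^ 2 + (q.2 - zbar) ^ 2) ↔
    (((projInt σ1 σ2 ybar - ybar) ^ 2 + zbar ^ 2 < ybar ^ 2 + (projInt τ1 τ2 zbar - zbar) ^ 2 ∧
        p = (projInt σ1 σ2 ybar, 0)) ∨
      (ybar ^ 2 + (projInt τ1 τ2 zbar - zbar) ^ 2 < (projInt σ1 σ2 ybar - ybar) ^ 2 + zbar ^ 2 ∧
        p = (0, projInt τ1 τ2 zbar)) ∨
      ((projInt σ1 σ2 ybar - ybar) ^ 2 + zbar ^ 2 = ybar ^ 2 + (projInt τ1 τ2 zbar - zbar) ^ 2 ∧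
        (p = (projInt σ1 σ2 ybar, 0) ∨ p = (0, projInt τ1 τ2 zbar)))) := by
  have hσ : σ1 ≤ σ2 := hσ1.trans hσ2.le
  have hτ : τ1 ≤ τ2 := hτ1.trans hτ2.le
  set s := projInt σ1 σ2 ybar with hs
  set t := projInt τ1 τ2 zbar with ht
  have hsm := projInt_mem hσ ybar
  have htm := projInt_mem hτ zbar
  have hP1 : ((s, 0) : ℝ × ℝ) ∈ (Set.Icc σ1 σ2 ×ˢ ({0} : Set ℝ)) ∪
      (({0} : Set ℝ) ×ˢ Set.Icc τ1 τ2) := Or.inl ⟨hsm, rfl⟩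
  have hP2 : ((0, t) : ℝ × ℝ) ∈ (Set.Icc σ1 σ2 ×ˢ ({0} : Set ℝ)) ∪
      (({0} : Set ℝ) ×ˢ Set.Icc τ1 τ2) := Or.inr ⟨rfl, htm⟩
  constructor
  · rintro ⟨hp, hmin⟩
    have hle1 := hmin _ hP1
    have hle2 := hmin _ hP2
    simp only at hle1 hle2
    rcases hp with ⟨ha, hb⟩ | ⟨ha, hb⟩
    · -- p = (a, 0)
      have hb0 : p.2 = 0 := hb
      have hps : p.1 = s := by
        apply projInt_uniq hσ ha
        rw [hb0] at hle1
        nlinarith [projInt_min hσ (t := ybar) ha]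
      have hpe : p = (s, 0) := Prod.ext hps hb0
      -- φs ≤ φt
      have hst : (s - ybar) ^ 2 + zbar ^ 2 ≤ ybar ^ 2 + (t - zbar) ^ 2 := by
        rw [hpe] at hle2; simpa using hle2.trans_eq (by ring)
      rcases eq_or_lt_of_le hst with heq | hlt
      · exact Or.inr (Or.inr ⟨heq, Or.inl hpe⟩)
      · exact Or.inl ⟨hlt, hpe⟩
    · have ha0 : p.1 = 0 := ha
      have hpt : p.2 = t := by
        apply projInt_uniq hτ hb
        rw [ha0] at hle2
        nlinarith [projInt_min hτ (t := zbar) hb]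
      have hpe : p = (0, t) := Prod.ext ha0 hpt
      have hts : ybar ^ 2 + (t - zbar) ^ 2 ≤ (s - ybar) ^ 2 + zbar ^ 2 := by
        rw [hpe] at hle1; simpa using hle1.trans_eq (by ring)
      rcases eq_or_lt_of_le hts with heq | hlt
      · exact Or.inr (Or.inr ⟨heq.symm, Or.inr hpe⟩)
      · exact Or.inr (Or.inl ⟨hlt, hpe⟩)
  · -- backward
    have key : ∀ (v : ℝ × ℝ), ((v.1 - ybar) ^ 2 + (v.2 - zbar) ^ 2 ≤ (s - ybar) ^ 2 + zbar ^ 2 ∨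
        (v.1 - ybar) ^ 2 + (v.2 - zbar) ^ 2 ≤ ybar ^ 2 + (t - zbar) ^ 2) →
        ((v.1 - ybar) ^ 2 + (v.2 - zbar) ^ 2 ≤ (s - ybar) ^ 2 + zbar ^ 2 ∧
         (v.1 - ybar) ^ 2 + (v.2 - zbar) ^ 2 ≤ ybar ^ 2 + (t - zbar) ^ 2) → True := fun _ _ _ => trivial
    have hmin : ∀ c : ℝ, (c ≤ (s - ybar) ^ 2 + zbar ^ 2) → (c ≤ ybar ^ 2 + (t - zbar) ^ 2) →
        ∀ q ∈ (Set.Icc σ1 σ2 ×ˢ ({0} : Set ℝ)) ∪ (({0} : Set ℝ) ×ˢ Set.Icc τ1 τ2),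
          c ≤ (q.1 - ybar) ^ 2 + (q.2 - zbar) ^ 2 := by
      rintro c h1 h2 q (⟨ha, hb⟩ | ⟨ha, hb⟩)
      · have hb0 : q.2 = 0 := hb
        have := projInt_min hσ (t := ybar) ha
        rw [hb0]; nlinarith
      · have ha0 : q.1 = 0 := ha
        have := projInt_min hτ (t := zbar) hb
        rw [ha0]; nlinarith
    rintro (⟨hlt, rfl⟩ | ⟨hlt, rfl⟩ | ⟨heq, rfl | rfl⟩)
    · refine ⟨hP1, ?_⟩
      have : ((s:ℝ) - ybar) ^ 2 + ((0:ℝ) - zbar) ^ 2 = (s - ybar) ^ 2 + zbar ^ 2 := by ring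
      exact fun q hq => by
        have := hmin _ (le_of_eq this) (this.le.trans hlt.le) q hq; simpa using this
    · refine ⟨hP2, ?_⟩
      have : ((0:ℝ) - ybar) ^ 2 + ((t:ℝ) - zbar) ^ 2 = ybar ^ 2 + (t - zbar) ^ 2 := by ring
      exact fun q hq => by
        have := hmin _ (this.le.trans hlt.le) (le_of_eq this) q hq; simpa using this
    · refine ⟨hP1, ?_⟩
      have h : ((s:ℝ) - ybar) ^ 2 + ((0:ℝ) - zbar) ^ 2 = (s - ybar) ^ 2 + zbar ^ 2 := by ring
      exact fun q hq => by
        have := hmin _ (le_of_eq h) (h.le.trans heq.le) q hq; simpa using this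
    · refine ⟨hP2, ?_⟩
      have h : ((0:ℝ) - ybar) ^ 2 + ((t:ℝ) - zbar) ^ 2 = ybar ^ 2 + (t - zbar) ^ 2 := by ring
      exact fun q hq => by
        have := hmin _ (h.le.trans heq.ge) (le_of_eq h) q hq; simpa using this
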